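/- Let m : ℕ → ℕ be the function that interprets the binary representation of n as a base-4 number, i.e., m(0) = 0, m(2n) = 4·m(n), m(2n+1) = 4·m(n) + 1. Then for all n, (n² + 2n)/3 ≤ m(n) ≤ n², i.e., n² + 2n ≤ 3·m(n) and m(n) ≤ n². -/

import Mathlib

def m : ℕ → ℕ
  | 0 => 0
  | (n+1) => 4 * m ((n+1)/2) + (n+1) % 2
decreasing_by exact Nat.div_lt_self (Nat.succ_pos n) (by norm_num)

lemma m_eq_four_mul_add_mod (n : ℕ) : m n = 4 * m (n / 2) + n % 2 := by
  cases n with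
  | zero => simp [m]
  | succ n => rw [m]

lemma m_two_mul (n : ℕ) : m (2 * n) = 4 * m n := by
  rw [m_eq_four_mul_add_mod, Nat.mul_div_cancel_left n two_pos, Nat.mul_mod_right, add_zero]

lemma m_two_mul_add_one (n : ℕ) : m (2 * n + 1) = 4 * m n + 1 := by
  rw [m_eq_four_mul_add_mod, show (2 * n + 1) / 2 = n by omega, Nat.mul_add_mod_self_left]

lemma m_le_sq (n : ℕ) : m n ≤ n ^ 2 := by
  induction n using Nat.evenOddRec with
  | h0 => simp [m]
  | h_even k ih => rw [m_two_mul]; linarith [Nat.zero_le k]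
  | h_odd k ih => rw [m_two_mul_add_one]; linarith [Nat.zero_le k]

lemma sq_add_two_mul_le_three_mul_m (n : ℕ) : n ^ 2 + 2 * n ≤ 3 * m n := by
  induction n using Nat.evenOddRec with
  | h0 => simp [m]
  | h_even k ih => rw [m_two_mul]; linarith [Nat.zero_le k]
  | h_odd k ih => rw [m_two_mul_add_one]; linarith [Nat.zero_le k]

theorem stmt17 : ∀ n : ℕ, n^2 + 2*n ≤ 3 * m n ∧ m n ≤ n^2 :=
  fun n => ⟨sq_add_two_mul_le_three_mul_m n, m_le_sq n⟩
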